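/- arXiv:2604.19187 — 2 statements merged into one kernel-verified Lean document; each statement's English description precedes it below -/
import Mathlib

section
/- Let α, β, γ : ℝ → ℝ be bounded measurable functions with β, γ nonnegative, let c ≥ 0 be a constant, and define ϑ_t = ∫_{-∞}^t exp(2∫_u^t (α_r + β_r) dr) (2γ_u + c) du, assumed finite for all t. Then for all t ∈ ℝ, ∫_{-∞}^t exp(2∫_u^t α_r dr) (2β_u ϑ_u + 2γ_u + c) du = ϑ_t. -/
open MeasureTheory Real Set
open scoped ENNReal

/-!
Substituting the definition of `ϑ` into the left-hand side and exchanging the two integrations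
(Tonelli in `ℝ≥0∞`, so no integrability of the double integral is needed) turns the `2βϑ` term
into `∫_{s<t} e^{2∫_s^t α} (2γ_s + c) (∫_s^t 2β_u e^{2∫_s^u β} du) ds`. The inner integral is
`e^{2∫_s^t β} - 1`, since `u ↦ e^{2∫_s^u β}` is absolutely continuous with derivative
`2β_u e^{2∫_s^u β}` almost everywhere. Adding the `2γ + c` term reproduces the integrand of `ϑ_t`.
-/

open Filter in
theorem LocallyLipschitz.comp_absolutelyContinuousOnInterval {X Y : Type*}
    [SeminormedAddCommGroup X] [PseudoMetricSpace Y] {φ : X → Y} {f : ℝ → X} {a b : ℝ}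
    (hφ : LocallyLipschitz φ) (hf : AbsolutelyContinuousOnInterval f a b) :
    AbsolutelyContinuousOnInterval (φ ∘ f) a b := by
  have hcpt : IsCompact (f '' uIcc a b) :=
    isCompact_uIcc.image_of_continuousOn (AbsolutelyContinuousOnInterval.continuousOn hf)
  obtain ⟨K, hK⟩ := LocallyLipschitzOn.exists_lipschitzOnWith_of_compact hcpt
    (hφ.locallyLipschitzOn (s := f '' uIcc a b))
  unfold AbsolutelyContinuousOnInterval at hf ⊢
  refine squeeze_zero' (Eventually.of_forall fun _ ↦ Finset.sum_nonneg fun _ _ ↦ dist_nonneg) ?_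
    (by simpa using hf.const_mul (K : ℝ))
  rw [eventually_inf_principal]
  filter_upwards with ⟨n, I⟩ hnI
  rw [Finset.mul_sum]
  gcongr with i hi
  exact hK.dist_le_mul _ (mem_image_of_mem f (hnI.1 i hi).1) _ (mem_image_of_mem f (hnI.1 i hi).2)

theorem integral_mul_exp_integral {b : ℝ → ℝ} {s t : ℝ} (hb : IntervalIntegrable b volume s t) :
    ∫ u in s..t, b u * exp (∫ r in s..u, b r) = exp (∫ r in s..t, b r) - 1 := by
  have hP := hb.absolutelyContinuousOnInterval_intervalIntegral (c := s) left_mem_uIcc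
  have hexpP := contDiff_exp.locallyLipschitz.comp_absolutelyContinuousOnInterval hP
  have hFTC := hexpP.integral_deriv_eq_sub
  simp only [Function.comp_apply, intervalIntegral.integral_same, exp_zero] at hFTC
  rw [← hFTC]
  refine intervalIntegral.integral_congr_ae ?_
  filter_upwards [hb.ae_hasDerivAt_integral] with x hx hxI
  rw [mul_comm]
  exact ((hasDerivAt_exp _).comp x (hx (uIoc_subset_uIcc hxI) s left_mem_uIcc)).deriv.symm

theorem lintegral_Ioo_mul_exp_integral {b : ℝ → ℝ} {s t : ℝ} (hst : s ≤ t)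
    (hb : IntervalIntegrable b volume s t) (hb0 : ∀ x, 0 ≤ b x) :
    ∫⁻ u in Ioo s t, ENNReal.ofReal (b u * exp (∫ r in s..u, b r))
      = ENNReal.ofReal (exp (∫ r in s..t, b r) - 1) := by
  have hint : IntervalIntegrable (fun u ↦ b u * exp (∫ r in s..u, b r)) volume s t :=
    hb.mul_continuousOn
      (hb.absolutelyContinuousOnInterval_intervalIntegral left_mem_uIcc).continuousOn.rexp
  rw [Measure.restrict_congr_set Ioo_ae_eq_Ioc, ← ofReal_integral_eq_lintegral_ofReal
    ((intervalIntegrable_iff_integrableOn_Ioc_of_le hst).1 hint)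
    (ae_of_all _ fun u ↦ mul_nonneg (hb0 u) (exp_pos _).le),
    ← intervalIntegral.integral_of_le hst, integral_mul_exp_integral hb]

theorem MeasureTheory.LocallyIntegrable.intervalIntegrable {E : Type*} [NormedAddCommGroup E]
    {f : ℝ → E} {μ : Measure ℝ} (hf : LocallyIntegrable f μ) (a b : ℝ) :
    IntervalIntegrable f μ a b :=
  (hf.integrableOn_isCompact isCompact_uIcc).intervalIntegrable

theorem MeasureTheory.locallyIntegrable_of_abs_le {X : Type*} [MeasurableSpace X]
    [TopologicalSpace X] {μ : Measure X} [IsLocallyFiniteMeasure μ] {f : X → ℝ} {M : ℝ}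
    (hf : Measurable f) (hM : ∀ x, |f x| ≤ M) : LocallyIntegrable f μ :=
  (locallyIntegrable_const M).mono hf.aestronglyMeasurable
    (ae_of_all _ fun x ↦ by simpa using (hM x).trans (le_abs_self M))

theorem MeasureTheory.LocallyIntegrable.continuous_intervalIntegral {f : ℝ → ℝ}
    (hf : LocallyIntegrable f volume) : Continuous fun p : ℝ × ℝ ↦ ∫ r in p.1..p.2, f r := by
  have hprim := intervalIntegral.continuous_primitive hf.intervalIntegrable 0
  have : (fun p : ℝ × ℝ ↦ ∫ r in p.1..p.2, f r)
      = fun p ↦ (∫ r in 0..p.2, f r) - ∫ r in 0..p.1, f r := by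
    ext p
    exact (intervalIntegral.integral_interval_sub_left (hf.intervalIntegrable 0 _)
      (hf.intervalIntegrable 0 _)).symm
  rw [this]
  exact (hprim.comp continuous_snd).sub (hprim.comp continuous_fst)

theorem lintegral_Iio_lintegral_Iio_swap {F : ℝ → ℝ → ℝ≥0∞}
    (hF : AEMeasurable (Function.uncurry F) (volume.prod volume)) (t : ℝ) :
    ∫⁻ u in Iio t, ∫⁻ s in Iio u, F u s = ∫⁻ s in Iio t, ∫⁻ u in Ioo s t, F u s := by
  set T : Set (ℝ × ℝ) := {p | p.2 < p.1 ∧ p.1 < t}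
  have hT : MeasurableSet T := (measurableSet_lt measurable_snd measurable_fst).inter
    (measurableSet_lt measurable_fst measurable_const)
  calc ∫⁻ u in Iio t, ∫⁻ s in Iio u, F u s
      = ∫⁻ u, ∫⁻ s, T.indicator (Function.uncurry F) (u, s) := by
        rw [← lintegral_indicator measurableSet_Iio]
        congr 1 with u
        by_cases hu : u < t
        · rw [indicator_of_mem (mem_Iio.2 hu), ← lintegral_indicator measurableSet_Iio]
          congr 1 with s
          by_cases hs : s < u <;> simp [T, indicator, hs, hu]
        · simp [T, indicator, hu]
    _ = ∫⁻ s, ∫⁻ u, T.indicator (Function.uncurry F) (u, s) :=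
        lintegral_lintegral_swap (hF.indicator hT)
    _ = ∫⁻ s in Iio t, ∫⁻ u in Ioo s t, F u s := by
        rw [← lintegral_indicator measurableSet_Iio]
        congr 1 with s
        by_cases hs : s < t
        · rw [indicator_of_mem (mem_Iio.2 hs), ← lintegral_indicator measurableSet_Ioo]
          congr 1 with u
        · have : ∀ u, ¬ (s < u ∧ u < t) := fun u h ↦ hs (h.1.trans h.2)
          simp [T, indicator, hs, this]

theorem exp_integral_mul_exp_integral_add {a b : ℝ → ℝ} (ha : LocallyIntegrable a volume)
    (hb : LocallyIntegrable b volume) (s u t : ℝ) :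
    exp (∫ r in u..t, a r) * exp (∫ r in s..u, (a r + b r))
      = exp (∫ r in s..t, a r) * exp (∫ r in s..u, b r) := by
  rw [← exp_add, ← exp_add, intervalIntegral.integral_add (ha.intervalIntegrable s u)
    (hb.intervalIntegrable s u), ← intervalIntegral.integral_add_adjacent_intervals
    (ha.intervalIntegrable s u) (ha.intervalIntegrable u t)]
  ring_nf

theorem lintegral_Ioo_exp_integral_mul_add {a b : ℝ → ℝ} (ha : LocallyIntegrable a volume)
    (hb : LocallyIntegrable b volume) (hb0 : ∀ x, 0 ≤ b x) {s t c : ℝ} (hst : s ≤ t) (hc : 0 ≤ c) :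
    (∫⁻ u in Ioo s t, ENNReal.ofReal (exp (∫ r in u..t, a r) * b u)
        * ENNReal.ofReal (exp (∫ r in s..u, (a r + b r)) * c))
      + ENNReal.ofReal (exp (∫ r in s..t, a r) * c)
      = ENNReal.ofReal (exp (∫ r in s..t, (a r + b r)) * c) := by
  have hfactor : ∀ u, ENNReal.ofReal (exp (∫ r in u..t, a r) * b u)
        * ENNReal.ofReal (exp (∫ r in s..u, (a r + b r)) * c)
      = ENNReal.ofReal (exp (∫ r in s..t, a r) * c)
        * ENNReal.ofReal (b u * exp (∫ r in s..u, b r)) := fun u ↦ by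
    rw [← ENNReal.ofReal_mul (mul_nonneg (exp_pos _).le (hb0 u)),
      ← ENNReal.ofReal_mul (mul_nonneg (exp_pos _).le hc)]
    congr 1
    linear_combination b u * c * exp_integral_mul_exp_integral_add ha hb s u t
  have hgrowth : 0 ≤ exp (∫ r in s..t, b r) - 1 := by
    linarith [one_le_exp (intervalIntegral.integral_nonneg (μ := volume) hst fun r _ ↦ hb0 r)]
  have htotal := exp_integral_mul_exp_integral_add ha hb s t t
  simp only [intervalIntegral.integral_same, exp_zero, one_mul] at htotal
  simp_rw [hfactor]
  rw [lintegral_const_mul' _ _ ENNReal.ofReal_ne_top,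
    lintegral_Ioo_mul_exp_integral hst (hb.intervalIntegrable s t) hb0,
    ← ENNReal.ofReal_mul (mul_nonneg (exp_pos _).le hc),
    ← ENNReal.ofReal_add (mul_nonneg (mul_nonneg (exp_pos _).le hc) hgrowth)
      (mul_nonneg (exp_pos _).le hc), htotal]
  ring_nf

theorem setIntegral_Iio_exp_integral_mul_eq {a b g ϑ : ℝ → ℝ} (ha : LocallyIntegrable a volume)
    (hb : LocallyIntegrable b volume) (hb0 : ∀ x, 0 ≤ b x) (hg : Measurable g)
    (hg0 : ∀ x, 0 ≤ g x)
    (hϑ : ∀ t, ϑ t = ∫ u in Iio t, exp (∫ r in u..t, (a r + b r)) * g u)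
    (hfin : ∀ t, IntegrableOn (fun u ↦ exp (∫ r in u..t, (a r + b r)) * g u) (Iio t)) (t : ℝ) :
    ∫ u in Iio t, exp (∫ r in u..t, a r) * (b u * ϑ u + g u) = ϑ t := by
  set K : ℝ → ℝ → ℝ := fun u s ↦ exp (∫ r in s..u, (a r + b r)) * g s
  set e : ℝ → ℝ := fun u ↦ exp (∫ r in u..t, a r)
  have hK0 : ∀ u s, 0 ≤ K u s := fun u s ↦ mul_nonneg (exp_pos _).le (hg0 s)
  have hKm : Measurable (Function.uncurry K) :=
    ((ha.add hb).continuous_intervalIntegral.comp continuous_swap).rexp.measurable.mul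
      (hg.comp measurable_snd)
  have hem : Measurable e :=
    (ha.continuous_intervalIntegral.comp (by fun_prop : Continuous fun u ↦ (u, t))).rexp.measurable
  have hϑ0 : ∀ u, 0 ≤ ϑ u := fun u ↦
    (hϑ u).symm ▸ setIntegral_nonneg measurableSet_Iio fun s _ ↦ hK0 u s
  have hϑ_lint : ∀ u, ENNReal.ofReal (ϑ u) = ∫⁻ s in Iio u, ENNReal.ofReal (K u s) := fun u ↦ by
    rw [hϑ u, ofReal_integral_eq_lintegral_ofReal (hfin u) (ae_of_all _ fun s ↦ hK0 u s)]
  have hϑm : StronglyMeasurable ϑ := by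
    have : ϑ = fun u ↦ ∫ s, {p : ℝ × ℝ | p.2 < p.1}.indicator (Function.uncurry K) (u, s) := by
      ext u
      rw [hϑ u, ← integral_indicator measurableSet_Iio]
      congr 1 with s
    rw [this]
    exact (hKm.indicator (measurableSet_lt measurable_snd measurable_fst)).stronglyMeasurable
      |>.integral_prod_right'
  have hsplit : ∀ u, ENNReal.ofReal (e u * (b u * ϑ u + g u))
      = (∫⁻ s in Iio u, ENNReal.ofReal (e u * b u) * ENNReal.ofReal (K u s))
        + ENNReal.ofReal (e u * g u) := fun u ↦ by
    rw [mul_add, ENNReal.ofReal_add (mul_nonneg (exp_pos _).le (mul_nonneg (hb0 u) (hϑ0 u)))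
      (mul_nonneg (exp_pos _).le (hg0 u)), ← mul_assoc,
      ENNReal.ofReal_mul (mul_nonneg (exp_pos _).le (hb0 u)), hϑ_lint,
      lintegral_const_mul' _ _ ENNReal.ofReal_ne_top]
  have hW : AEMeasurable (Function.uncurry fun u s ↦
      ENNReal.ofReal (e u * b u) * ENNReal.ofReal (K u s)) (volume.prod volume) :=
    (hem.aemeasurable.mul hb.aestronglyMeasurable.aemeasurable).ennreal_ofReal.comp_fst.mul
      hKm.ennreal_ofReal.aemeasurable
  have hegm : Measurable fun u ↦ ENNReal.ofReal (e u * g u) := (hem.mul hg).ennreal_ofReal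
  calc ∫ u in Iio t, e u * (b u * ϑ u + g u)
      = (∫⁻ u in Iio t, ENNReal.ofReal (e u * (b u * ϑ u + g u))).toReal :=
        integral_eq_lintegral_of_nonneg_ae (ae_of_all _ fun u ↦ mul_nonneg (exp_pos _).le
          (add_nonneg (mul_nonneg (hb0 u) (hϑ0 u)) (hg0 u)))
          (hem.aestronglyMeasurable.mul ((hb.aestronglyMeasurable.mul
            hϑm.aestronglyMeasurable).add hg.aestronglyMeasurable)).restrict
    _ = (∫⁻ s in Iio t, ((∫⁻ u in Ioo s t, ENNReal.ofReal (e u * b u) * ENNReal.ofReal (K u s))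
          + ENNReal.ofReal (e s * g s))).toReal := by
        simp_rw [hsplit]
        rw [lintegral_add_right' _ hegm.aemeasurable, lintegral_Iio_lintegral_Iio_swap hW,
          lintegral_add_right' _ hegm.aemeasurable]
    _ = (∫⁻ s in Iio t, ENNReal.ofReal (K t s)).toReal := by
        congr 1
        exact setLIntegral_congr_fun measurableSet_Iio fun s hs ↦
          lintegral_Ioo_exp_integral_mul_add ha hb hb0 (le_of_lt hs) (hg0 s)
    _ = ϑ t := by rw [← hϑ_lint, ENNReal.toReal_ofReal (hϑ0 t)]

theorem stmt0_general
    (α β γ : ℝ → ℝ) (c : ℝ)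
    (hαm : Measurable α) (hβm : Measurable β) (hγm : Measurable γ)
    (Mα Mβ : ℝ)
    (hαb : ∀ t, |α t| ≤ Mα) (hβb : ∀ t, |β t| ≤ Mβ)
    (hβ0 : ∀ t, 0 ≤ β t) (hγ0 : ∀ t, 0 ≤ γ t) (hc : 0 ≤ c)
    (ϑ : ℝ → ℝ)
    (hϑ : ∀ t, ϑ t = ∫ u in Iio t,
      Real.exp (2 * ∫ r in u..t, (α r + β r)) * (2 * γ u + c))
    (hfin : ∀ t, IntegrableOn
      (fun u => Real.exp (2 * ∫ r in u..t, (α r + β r)) * (2 * γ u + c)) (Iio t)) :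
    ∀ t, (∫ u in Iio t,
      Real.exp (2 * ∫ r in u..t, α r) * (2 * β u * ϑ u + 2 * γ u + c)) = ϑ t := by
  intro t
  have double_abs_le : ∀ {f : ℝ → ℝ} {M : ℝ}, (∀ x, |f x| ≤ M) → ∀ x, |2 * f x| ≤ 2 * M :=
    fun hM x ↦ by rw [abs_mul, abs_two]; linarith [hM x]
  have hsum : ∀ u v, 2 * ∫ r in u..v, (α r + β r) = ∫ r in u..v, (2 * α r + 2 * β r) :=
    fun u v ↦ by simp_rw [← mul_add]; exact (intervalIntegral.integral_const_mul _ _).symm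
  have hα : ∀ u v, 2 * ∫ r in u..v, α r = ∫ r in u..v, 2 * α r :=
    fun u v ↦ (intervalIntegral.integral_const_mul _ _).symm
  simp only [hsum] at hϑ hfin
  simp only [hα]
  convert setIntegral_Iio_exp_integral_mul_eq
    (locallyIntegrable_of_abs_le (hαm.const_mul 2) (double_abs_le hαb))
    (locallyIntegrable_of_abs_le (hβm.const_mul 2) (double_abs_le hβb))
    (fun x ↦ by linarith [hβ0 x])
    (hγm.const_mul 2 |>.add_const c) (fun x ↦ by linarith [hγ0 x]) hϑ hfin t using 3
  ring

/-- identity for ϑ. -/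
theorem stmt0
    (α β γ : ℝ → ℝ) (c : ℝ)
    (hαm : Measurable α) (hβm : Measurable β) (hγm : Measurable γ)
    (Mα Mβ Mγ : ℝ)
    (hαb : ∀ t, |α t| ≤ Mα) (hβb : ∀ t, |β t| ≤ Mβ) (hγb : ∀ t, |γ t| ≤ Mγ)
    (hβ0 : ∀ t, 0 ≤ β t) (hγ0 : ∀ t, 0 ≤ γ t) (hc : 0 ≤ c)
    (ϑ : ℝ → ℝ)
    (hϑ : ∀ t, ϑ t = ∫ u in Iio t,
      Real.exp (2 * ∫ r in u..t, (α r + β r)) * (2 * γ u + c))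
    (hfin : ∀ t, IntegrableOn
      (fun u => Real.exp (2 * ∫ r in u..t, (α r + β r)) * (2 * γ u + c)) (Iio t)) :
    ∀ t, (∫ u in Iio t,
      Real.exp (2 * ∫ r in u..t, α r) * (2 * β u * ϑ u + 2 * γ u + c)) = ϑ t :=
  stmt0_general α β γ c hαm hβm hγm Mα Mβ hαb hβb hβ0 hγ0 hc ϑ hϑ hfin
end

section
/- Let α, β : ℝ → ℝ be bounded measurable functions and suppose there exist l > 0 and a > 0 such that ∫_t^{t+l} (α_r + β_r) dr ≤ -a for all t ∈ ℝ. Let γ : ℝ → ℝ be bounded nonnegative and c ≥ 0. Then sup_{t∈ℝ} ∫_{-∞}^t exp(2∫_u^t (α_r+β_r) dr) (2γ_u + c) du ≤ e^{4lM}(2M + c)l / (1 - e^{-2a}), where M = max(‖α‖_∞, ‖β‖_∞, ‖γ‖_∞). In particular this supremum is finite. -/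
/-!
Cut `(-∞, t)` into the windows `(t - (n+1) l, t - n l]`. On the `n`-th window the exponent
`∫_u^t (α + β)` is at most `2 M l - n a`: the dissipativity hypothesis applied `n` times
gives `-n a`, and the remaining piece of length `< l` contributes at most `2 M l`. Hence the
integrand is bounded by `e^{4 l M} (2 M + c) (e^{-2a})ⁿ` there, and summing the geometric
series over the windows, each of length `l`, gives the bound.
-/

open MeasureTheory Real Set

lemma intervalIntegrable_of_abs_le {f : ℝ → ℝ} {K : ℝ} (hfm : Measurable f)
    (hfK : ∀ x, |f x| ≤ K) (u v : ℝ) : IntervalIntegrable f volume u v :=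
  intervalIntegrable_const.mono_fun' hfm.aestronglyMeasurable
    (ae_of_all _ fun x => hfK x)

lemma integral_add_nat_mul_le {f : ℝ → ℝ} {l a : ℝ}
    (hf : ∀ u v, IntervalIntegrable f volume u v)
    (hdiss : ∀ t, ∫ r in t..t + l, f r ≤ -a) (n : ℕ) (u : ℝ) :
    ∫ r in u..u + n * l, f r ≤ -(n * a) := by
  induction n with
  | zero => simp
  | succ n ih =>
    rw [show u + (n + 1 : ℕ) * l = u + n * l + l by push_cast; ring,
      ← intervalIntegral.integral_add_adjacent_intervals (hf _ _) (hf _ _)]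
    push_cast
    linarith [hdiss (u + n * l)]

lemma integral_le_of_mem_Ioc {f : ℝ → ℝ} {K l a t u : ℝ} {n : ℕ}
    (hf : ∀ u v, IntervalIntegrable f volume u v) (hfK : ∀ x, |f x| ≤ K)
    (hdiss : ∀ t, ∫ r in t..t + l, f r ≤ -a) (hu : u ∈ Ioc (t - (n + 1) * l) (t - n * l)) :
    ∫ r in u..t, f r ≤ K * l - n * a := by
  obtain ⟨hu_lo, hu_hi⟩ := hu
  have hK : 0 ≤ K := (abs_nonneg _).trans (hfK 0)
  have h_tail : ∫ r in u + n * l..t, f r ≤ K * l :=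
    calc ∫ r in u + n * l..t, f r ≤ ‖∫ r in u + n * l..t, f r‖ := le_abs_self _
      _ ≤ K * |t - (u + n * l)| :=
        intervalIntegral.norm_integral_le_of_norm_le_const fun x _ => hfK x
      _ ≤ K * l := by
        gcongr
        rw [abs_of_nonneg (by linarith)]
        linarith
  rw [← intervalIntegral.integral_add_adjacent_intervals (hf u (u + n * l)) (hf _ t)]
  linarith [integral_add_nat_mul_le hf hdiss n u]

lemma Iio_subset_iUnion_Ioc_sub_mul {l : ℝ} (hl : 0 < l) (t : ℝ) :
    Iio t ⊆ ⋃ n : ℕ, Ioc (t - (n + 1) * l) (t - n * l) := by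
  intro x hxt
  have hnonneg : 0 ≤ (t - x) / l := div_nonneg (by linarith [mem_Iio.1 hxt]) hl.le
  refine mem_iUnion.2 ⟨⌊(t - x) / l⌋₊, ?_, ?_⟩
  · linarith [(div_lt_iff₀ hl).1 (Nat.lt_floor_add_one ((t - x) / l))]
  · linarith [(le_div_iff₀ hl).1 (Nat.floor_le hnonneg)]

lemma lintegral_Iio_le_of_le_geometric {f : ℝ → ℝ} {t l C r : ℝ} (hl : 0 < l) (hC : 0 ≤ C)
    (hr₀ : 0 ≤ r) (hr₁ : r < 1)
    (hf : ∀ n : ℕ, ∀ u ∈ Ioc (t - (n + 1) * l) (t - n * l), f u ≤ C * r ^ n) :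
    ∫⁻ u in Iio t, ENNReal.ofReal (f u) ≤ ENNReal.ofReal (C * l / (1 - r)) :=
  calc ∫⁻ u in Iio t, ENNReal.ofReal (f u)
      ≤ ∫⁻ u in ⋃ n : ℕ, Ioc (t - (n + 1) * l) (t - n * l), ENNReal.ofReal (f u) :=
        lintegral_mono_set (Iio_subset_iUnion_Ioc_sub_mul hl t)
    _ ≤ ∑' n : ℕ, ∫⁻ u in Ioc (t - (n + 1) * l) (t - n * l), ENNReal.ofReal (f u) :=
        lintegral_iUnion_le _ _
    _ ≤ ∑' n : ℕ, ENNReal.ofReal C * ENNReal.ofReal l * ENNReal.ofReal r ^ n := by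
        refine ENNReal.tsum_le_tsum fun n => ?_
        calc ∫⁻ u in Ioc (t - (n + 1) * l) (t - n * l), ENNReal.ofReal (f u)
            ≤ ∫⁻ _ in Ioc (t - (n + 1) * l) (t - n * l), ENNReal.ofReal (C * r ^ n) :=
              setLIntegral_mono' measurableSet_Ioc fun u hu =>
                ENNReal.ofReal_le_ofReal (hf n u hu)
          _ = ENNReal.ofReal C * ENNReal.ofReal l * ENNReal.ofReal r ^ n := by
              rw [setLIntegral_const, Real.volume_Ioc, ENNReal.ofReal_mul hC,
                ENNReal.ofReal_pow hr₀, show t - n * l - (t - (n + 1) * l) = l by ring]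
              ring
    _ = ENNReal.ofReal (C * l / (1 - r)) := by
        rw [ENNReal.tsum_mul_left, ENNReal.tsum_geometric, div_eq_mul_inv,
          ENNReal.ofReal_mul (mul_nonneg hC hl.le), ENNReal.ofReal_mul hC,
          ENNReal.ofReal_inv_of_pos (by linarith), ENNReal.ofReal_sub 1 hr₀, ENNReal.ofReal_one]

theorem stmt1_general
    (α β γ : ℝ → ℝ) (c : ℝ) (l a M : ℝ)
    (hl : 0 < l) (ha : 0 < a)
    (hαm : Measurable α) (hβm : Measurable β)
    (hαb : ∀ t, |α t| ≤ M) (hβb : ∀ t, |β t| ≤ M) (hγb : ∀ t, |γ t| ≤ M)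
    (hc : 0 ≤ c)
    (hdiss : ∀ t : ℝ, (∫ r in t..(t + l), (α r + β r)) ≤ -a) :
    ∀ t : ℝ,
      (∫⁻ u in Iio t, ENNReal.ofReal
          (Real.exp (2 * ∫ r in u..t, (α r + β r)) * (2 * γ u + c)))
        ≤ ENNReal.ofReal (Real.exp (4 * l * M) * (2 * M + c) * l / (1 - Real.exp (-2 * a))) := by
  intro t
  have hM : 0 ≤ M := (abs_nonneg _).trans (hαb 0)
  have hsum_bound : ∀ r, |α r + β r| ≤ 2 * M := fun r =>
    (abs_add_le _ _).trans (by linarith [hαb r, hβb r])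
  have hsum_int : ∀ u v, IntervalIntegrable (fun r => α r + β r) volume u v :=
    intervalIntegrable_of_abs_le (hαm.add hβm) hsum_bound
  refine lintegral_Iio_le_of_le_geometric hl (by positivity) (exp_pos _).le
    (exp_lt_one_iff.2 (by linarith)) fun n u hu => ?_
  have h_exponent := integral_le_of_mem_Ioc hsum_int hsum_bound hdiss hu
  calc exp (2 * ∫ r in u..t, (α r + β r)) * (2 * γ u + c)
      ≤ exp (2 * ∫ r in u..t, (α r + β r)) * (2 * M + c) := by
        gcongr
        linarith [(abs_le.1 (hγb u)).2]
    _ ≤ exp (2 * (2 * M * l - n * a)) * (2 * M + c) := by gcongr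
    _ = exp (4 * l * M) * (2 * M + c) * exp (-2 * a) ^ n := by
        rw [show 2 * (2 * M * l - n * a) = 4 * l * M + n * (-2 * a) by ring, exp_add,
          exp_nat_mul]
        ring

/-- uniform bound on ϑ under averaged dissipativity. -/
theorem stmt1
    (α β γ : ℝ → ℝ) (c : ℝ) (l a M : ℝ)
    (hl : 0 < l) (ha : 0 < a)
    (hαm : Measurable α) (hβm : Measurable β) (hγm : Measurable γ)
    (hαb : ∀ t, |α t| ≤ M) (hβb : ∀ t, |β t| ≤ M) (hγb : ∀ t, |γ t| ≤ M)
    (hγ0 : ∀ t, 0 ≤ γ t) (hc : 0 ≤ c)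
    (hdiss : ∀ t : ℝ, (∫ r in t..(t + l), (α r + β r)) ≤ -a) :
    ∀ t : ℝ,
      (∫⁻ u in Iio t, ENNReal.ofReal
          (Real.exp (2 * ∫ r in u..t, (α r + β r)) * (2 * γ u + c)))
        ≤ ENNReal.ofReal (Real.exp (4 * l * M) * (2 * M + c) * l / (1 - Real.exp (-2 * a))) :=
  stmt1_general α β γ c l a M hl ha hαm hβm hαb hβb hγb hc hdiss
end
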